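/- arXiv:2311.09317 — 2 statements merged into one kernel-verified Lean document; each statement's English description precedes it below -/
import Mathlib

section
/- Let G_x be a Bernoulli random graph on a uniformly random vertex subset V_x ⊆ [n] of size x with edge probability q, and let q_k(x,q) be the probability that no edge of G_x joins [k] to [n]\[k]. Then for 1 ≤ k ≤ n/2, 2 ≤ x ≤ n, and 0 ≤ q ≤ 1, one has q_k(x,q) ≤ 1 − 2·(k(n−k)/(n(n−1)))·q. -/
open Finset

/-- `q_k(x,q)`: the probability that a Bernoulli random graph with edge probability `q`
on a uniformly random `x`-subset `V_x ⊆ [n]` has no edge joining `[k]` to `[n]\[k]`.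
Conditioning on the number `j = |V_x ∩ [k]|` (hypergeometric weights) gives the formula. -/
noncomputable def qk (n k x : ℕ) (q : ℝ) : ℝ :=
  ∑ j ∈ Finset.range (x + 1),
    ((k.choose j * (n - k).choose (x - j) : ℝ) / (n.choose x : ℝ)) * (1 - q) ^ (j * (x - j))

lemma choose_ratio_mono (m n x : ℕ) (hmn : m ≤ n) :
    m.choose (x + 1) * n.choose x ≤ m.choose x * n.choose (x + 1) := by
  have h1 := Nat.choose_succ_right_eq m x
  have h2 := Nat.choose_succ_right_eq n x
  have key : (m.choose (x + 1) * n.choose x) * (x + 1)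
      ≤ (m.choose x * n.choose (x + 1)) * (x + 1) := by
    calc (m.choose (x + 1) * n.choose x) * (x + 1)
        = (m.choose (x + 1) * (x + 1)) * n.choose x := by ring
      _ = m.choose x * (m - x) * n.choose x := by rw [h1]
      _ ≤ m.choose x * (n - x) * n.choose x :=
          Nat.mul_le_mul_right _ (Nat.mul_le_mul_left _ (Nat.sub_le_sub_right hmn x))
      _ = (n.choose x * (n - x)) * m.choose x := by ring
      _ = (n.choose (x + 1) * (x + 1)) * m.choose x := by rw [h2]
      _ = (m.choose x * n.choose (x + 1)) * (x + 1) := by ring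
  exact Nat.le_of_mul_le_mul_right key (Nat.succ_pos x)

lemma S_mono (n k : ℕ) (hk : k ≤ n) : ∀ x, 2 ≤ x → x ≤ n →
    (k.choose x + (n - k).choose x) * n.choose 2
      ≤ (k.choose 2 + (n - k).choose 2) * n.choose x := by
  intro x hx2
  induction x, hx2 using Nat.le_induction with
  | base => exact fun _ => le_rfl
  | succ x hx ih =>
    intro hx1n
    have hxn : x ≤ n := le_trans (Nat.le_succ x) hx1n
    have ih' := ih hxn
    have hp1 := choose_ratio_mono k n x hk
    have hp2 := choose_ratio_mono (n - k) n x (Nat.sub_le n k)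
    have hpos : 0 < n.choose x := Nat.choose_pos hxn
    refine Nat.le_of_mul_le_mul_left ?_ hpos
    calc n.choose x * ((k.choose (x + 1) + (n - k).choose (x + 1)) * n.choose 2)
        = (k.choose (x + 1) * n.choose x + (n - k).choose (x + 1) * n.choose x)
            * n.choose 2 := by ring
      _ ≤ (k.choose x * n.choose (x + 1) + (n - k).choose x * n.choose (x + 1))
            * n.choose 2 := Nat.mul_le_mul_right _ (Nat.add_le_add hp1 hp2)
      _ = ((k.choose x + (n - k).choose x) * n.choose 2) * n.choose (x + 1) := by ring
      _ ≤ ((k.choose 2 + (n - k).choose 2) * n.choose x) * n.choose (x + 1) :=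
          Nat.mul_le_mul_right _ ih'
      _ = n.choose x * ((k.choose 2 + (n - k).choose 2) * n.choose (x + 1)) := by ring

lemma vander (n k x : ℕ) (hk : k ≤ n) :
    ∑ j ∈ Finset.range (x + 1), k.choose j * (n - k).choose (x - j) = n.choose x := by
  have h := Nat.add_choose_eq k (n - k) x
  rw [Finset.Nat.sum_antidiagonal_eq_sum_range_succ_mk] at h
  rw [← h, Nat.add_sub_cancel' hk]

/-- For `1 ≤ k ≤ n/2`, `2 ≤ x ≤ n`, `0 ≤ q ≤ 1`:
`q_k(x,q) ≤ 1 − 2 (k(n−k)/(n(n−1))) q`. -/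
theorem stmt8 (n k x : ℕ) (hk : 1 ≤ k) (hkn : 2 * k ≤ n) (hx2 : 2 ≤ x) (hxn : x ≤ n)
    (q : ℝ) (hq0 : 0 ≤ q) (hq1 : q ≤ 1) :
    qk n k x q ≤ 1 - 2 * ((k : ℝ) * ((n : ℝ) - k) / ((n : ℝ) * ((n : ℝ) - 1))) * q := by
  have hk' : k ≤ n := by omega
  have hn2 : 2 ≤ n := le_trans hx2 hxn
  set W : ℕ → ℝ := fun j =>
    ((k.choose j : ℝ) * ((n - k).choose (x - j) : ℝ)) / (n.choose x : ℝ) with hWdef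
  have hNpos : (0 : ℝ) < (n.choose x : ℝ) := by exact_mod_cast Nat.choose_pos hxn
  have hWnn : ∀ j, 0 ≤ W j := fun j => div_nonneg (by positivity) hNpos.le
  have hq' : (0 : ℝ) ≤ 1 - q := by linarith
  have hq'' : (1 : ℝ) - q ≤ 1 := by linarith
  have h0x : (0 : ℕ) ≠ x := by omega
  set E : ℝ := (k : ℝ) * ((n : ℝ) - k) / ((n : ℝ) * ((n : ℝ) - 1)) with hEdef
  -- sum of weights is 1
  have hsum : ∑ j ∈ Finset.range (x + 1), W j = 1 := by
    have hv := vander n k x hk'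
    have : ∑ j ∈ Finset.range (x + 1), W j
        = (∑ j ∈ Finset.range (x + 1), ((k.choose j * (n - k).choose (x - j) : ℕ) : ℝ))
            / (n.choose x : ℝ) := by
      rw [Finset.sum_div]
      refine Finset.sum_congr rfl fun j _ => ?_
      push_cast
      ring
    rw [this, ← Nat.cast_sum, hv, div_self hNpos.ne']
  -- step 1 : termwise bound
  have hstep : qk n k x q ≤ ∑ j ∈ Finset.range (x + 1),
      W j * ((1 - q) + q * (if j = 0 ∨ j = x then 1 else 0)) := by
    unfold qk
    refine Finset.sum_le_sum fun j hj => ?_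
    refine mul_le_mul_of_nonneg_left ?_ (hWnn j)
    by_cases h0 : j = 0 ∨ j = x
    · have he : j * (x - j) = 0 := by
        rcases h0 with h | h <;> simp [h]
      simp [h0, he]
    · push_neg at h0
      have hj' : j ≤ x := by
        have := Finset.mem_range.mp hj; omega
      have he : 1 ≤ j * (x - j) := by
        have : 1 ≤ j := by omega
        have : 1 ≤ x - j := by omega
        calc 1 = 1 * 1 := by norm_num
          _ ≤ j * (x - j) := Nat.mul_le_mul (by omega) (by omega)
      calc (1 - q) ^ (j * (x - j)) ≤ (1 - q) ^ 1 := pow_le_pow_of_le_one hq' hq'' he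
        _ = 1 - q := pow_one _
        _ = (1 - q) + q * (if j = 0 ∨ j = x then 1 else 0) := by simp [h0.1, h0.2]
  -- step 2 : compute the bounding sum
  have hsplit : ∑ j ∈ Finset.range (x + 1),
      W j * ((1 - q) + q * (if j = 0 ∨ j = x then 1 else 0))
      = (1 - q) + q * (W 0 + W x) := by
    have hcongr : ∀ j ∈ Finset.range (x + 1),
        W j * ((1 - q) + q * (if j = 0 ∨ j = x then 1 else 0))
        = (1 - q) * W j
            + (q * (if j = 0 then W j else 0) + q * (if j = x then W j else 0)) := by
      intro j _
      by_cases hj0 : j = 0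
      · subst hj0
        simp [h0x]
        ring
      · by_cases hjx : j = x
        · subst hjx
          simp [hj0]
          ring
        · simp [hj0, hjx]
          ring
    rw [Finset.sum_congr rfl hcongr, Finset.sum_add_distrib, Finset.sum_add_distrib,
      ← Finset.mul_sum, hsum, ← Finset.mul_sum, ← Finset.mul_sum]
    rw [Finset.sum_ite_eq' (Finset.range (x + 1)) 0 W,
      Finset.sum_ite_eq' (Finset.range (x + 1)) x W]
    simp [Finset.mem_range]
    ring
  -- step 3 : W 0 + W x ≤ 1 - 2E
  have hW0 : W 0 = ((n - k).choose x : ℝ) / (n.choose x : ℝ) := by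
    simp [hWdef]
  have hWx : W x = (k.choose x : ℝ) / (n.choose x : ℝ) := by
    simp [hWdef]
  have hkey : W 0 + W x ≤ 1 - 2 * E := by
    have hnat := S_mono n k hk' x hx2 hxn
    have hcast : ((k.choose x : ℝ) + ((n - k).choose x : ℝ)) * (n.choose 2 : ℝ)
        ≤ ((k.choose 2 : ℝ) + ((n - k).choose 2 : ℝ)) * (n.choose x : ℝ) := by
      exact_mod_cast hnat
    have hc2pos : (0 : ℝ) < (n.choose 2 : ℝ) := by
      exact_mod_cast Nat.choose_pos hn2
    have hn0 : (n : ℝ) ≠ 0 := by positivity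
    have hn1 : (n : ℝ) - 1 ≠ 0 := by
      have : (2 : ℝ) ≤ (n : ℝ) := by exact_mod_cast hn2
      linarith
    have hB : ((k.choose 2 : ℝ) + ((n - k).choose 2 : ℝ)) / (n.choose 2 : ℝ)
        = 1 - 2 * E := by
      rw [Nat.cast_choose_two, Nat.cast_choose_two, Nat.cast_choose_two,
        Nat.cast_sub hk', hEdef]
      field_simp
      ring
    rw [hW0, hWx, ← add_div, div_le_iff₀ hNpos, ← hB, div_mul_eq_mul_div,
      le_div_iff₀ hc2pos]
    calc (((n - k).choose x : ℝ) + (k.choose x : ℝ)) * (n.choose 2 : ℝ)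
        = ((k.choose x : ℝ) + ((n - k).choose x : ℝ)) * (n.choose 2 : ℝ) := by ring
      _ ≤ ((k.choose 2 : ℝ) + ((n - k).choose 2 : ℝ)) * (n.choose x : ℝ) := hcast
  -- assemble
  have hmul : q * (W 0 + W x) ≤ q * (1 - 2 * E) :=
    mul_le_mul_of_nonneg_left hkey hq0
  calc qk n k x q ≤ (1 - q) + q * (W 0 + W x) := by rw [← hsplit]; exact hstep
    _ ≤ (1 - q) + q * (1 - 2 * E) := by linarith
    _ = 1 - 2 * E * q := by ring
end

section
/- With q_k(x,q) defined as the probability that a Bernoulli random graph on a uniformly random x-subset of [n] with edge probability q has no edge between [k] and [n]\[k]: for 1 ≤ k ≤ n/2 and 2 ≤ x ≤ n, q_k(x,q) ≤ 1 − ((k/n)·x − R₁ − R₂)·h(x,q), where R₁ = k²/(n−k)², R₂ = e^{−kx/n} − 1 + kx/n, and h(x,q) = 1 − (1−q)^{x−1}. -/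
open Finset

lemma choose_ratio (x a b : ℕ) (hab : a ≤ b) :
    a.choose x * b ^ x ≤ b.choose x * a ^ x := by
  induction x with
  | zero => simp
  | succ x ih =>
    by_cases hax : x < a
    · have hxb : x < b := lt_of_lt_of_le hax hab
      have h1 : (a - x) * b ≤ (b - x) * a := by
        rw [Nat.sub_mul, Nat.sub_mul]
        have h2 : x * a ≤ x * b := Nat.mul_le_mul_left x hab
        have h3 : a * b = b * a := Nat.mul_comm a b
        have h4 : x * a ≤ a * b := by
          calc x * a ≤ a * a := Nat.mul_le_mul_right a (le_of_lt hax)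
            _ ≤ a * b := Nat.mul_le_mul_left a hab
        omega
      have h2 : a.choose (x+1) * b ^ (x+1) * (x+1) ≤ b.choose (x+1) * a ^ (x+1) * (x+1) := by
        calc a.choose (x+1) * b ^ (x+1) * (x+1)
            = a.choose (x+1) * (x+1) * b ^ (x+1) := by ring
          _ = a.choose x * (a - x) * b ^ (x+1) := by rw [Nat.choose_succ_right_eq]
          _ = (a.choose x * b ^ x) * ((a - x) * b) := by ring
          _ ≤ (b.choose x * a ^ x) * ((b - x) * a) := Nat.mul_le_mul ih h1
          _ = b.choose x * (b - x) * a ^ (x+1) := by ring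
          _ = b.choose (x+1) * (x+1) * a ^ (x+1) := by rw [Nat.choose_succ_right_eq]
          _ = b.choose (x+1) * a ^ (x+1) * (x+1) := by ring
      exact Nat.le_of_mul_le_mul_right h2 (Nat.succ_pos x)
    · have : a < x + 1 := by omega
      simp [Nat.choose_eq_zero_of_lt this]

/-- For `1 ≤ k ≤ n/2`, `2 ≤ x ≤ n`, `0 ≤ q ≤ 1`:
`q_k(x,q) ≤ 1 − ((k/n)x − R₁ − R₂) h(x,q)` with `R₁ = k²/(n−k)²`,
`R₂ = e^{−kx/n} − 1 + kx/n` and `h(x,q) = 1 − (1−q)^{x−1}`. -/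
theorem stmt9 (n k x : ℕ) (hk : 1 ≤ k) (hkn : 2 * k ≤ n) (hx2 : 2 ≤ x) (hxn : x ≤ n)
    (q : ℝ) (hq0 : 0 ≤ q) (hq1 : q ≤ 1) :
    qk n k x q ≤
      1 - ((k : ℝ) / n * x - (k : ℝ) ^ 2 / ((n : ℝ) - k) ^ 2
            - (Real.exp (-((k : ℝ) * x / n)) - 1 + (k : ℝ) * x / n))
          * (1 - (1 - q) ^ (x - 1)) := by
  have hkn' : k ≤ n := by omega
  have hkltn : k < n := by omega
  have hn0 : 0 < n := by omega
  have hnR : (0:ℝ) < n := by exact_mod_cast hn0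
  have hkR : (0:ℝ) ≤ k := by positivity
  have hkRn : (k:ℝ) < n := by exact_mod_cast hkltn
  have hNk : (0:ℝ) < (n:ℝ) - k := by linarith
  have hchoosepos : 0 < (n.choose x : ℝ) := by exact_mod_cast Nat.choose_pos hxn
  set p : ℝ := 1 - q with hp
  have hp0 : 0 ≤ p := by rw [hp]; linarith
  have hp1 : p ≤ 1 := by rw [hp]; linarith
  set h : ℝ := 1 - p ^ (x-1) with hhdef
  have hh0 : 0 ≤ h := by
    have : p ^ (x-1) ≤ 1 := pow_le_one₀ hp0 hp1
    rw [hhdef]; linarith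
  set w : ℕ → ℝ := fun j => ((k.choose j : ℝ) * ((n-k).choose (x-j) : ℝ)) / (n.choose x : ℝ)
    with hw
  have hwnn : ∀ j, 0 ≤ w j := fun j => by rw [hw]; positivity
  have hvander : ∑ j ∈ Finset.range (x+1), (k.choose j * (n-k).choose (x-j)) = n.choose x := by
    have h1 := Nat.add_choose_eq k (n-k) x
    rw [Finset.Nat.sum_antidiagonal_eq_sum_range_succ_mk] at h1
    have h2 : k + (n - k) = n := by omega
    rw [h2] at h1
    exact h1.symm
  have hsum : ∑ j ∈ Finset.range (x+1), w j = 1 := by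
    rw [hw]
    rw [← Finset.sum_div, div_eq_one_iff_eq (ne_of_gt hchoosepos)]
    push_cast
    exact_mod_cast congrArg (Nat.cast : ℕ → ℝ) hvander
  -- step 1: bound qk by 1 - h * (sum over middle)
  have hIco_sub : Finset.Ico 1 x ⊆ Finset.range (x+1) := by
    intro j hj
    simp only [Finset.mem_Ico] at hj
    simp only [Finset.mem_range]
    omega
  have hstep : qk n k x q ≤ 1 - h * ∑ j ∈ Finset.Ico 1 x, w j := by
    have hqk : qk n k x q = ∑ j ∈ Finset.range (x+1), w j * p ^ (j * (x - j)) := rfl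
    rw [hqk]
    have hbound : ∀ j ∈ Finset.range (x+1),
        w j * p ^ (j * (x-j)) ≤ w j - (if j ∈ Finset.Ico 1 x then h * w j else 0) := by
      intro j hj
      by_cases hmem : j ∈ Finset.Ico 1 x
      · simp only [hmem, if_pos]
        simp only [Finset.mem_Ico] at hmem
        have hb1 : 1 ≤ x - j := by omega
        have hexp : x - 1 ≤ j * (x - j) := by
          have h2 : x - j - 1 ≤ j * (x - j - 1) := Nat.le_mul_of_pos_left _ (by omega)
          have h3 : j * (x - j) = j * (x - j - 1) + j * 1 := by
            rw [← Nat.mul_add]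
            congr 1
            omega
          omega
        have h4 : p ^ (j * (x-j)) ≤ p ^ (x-1) := pow_le_pow_of_le_one hp0 hp1 hexp
        have h5 : w j * p ^ (j * (x-j)) ≤ w j * p ^ (x-1) :=
          mul_le_mul_of_nonneg_left h4 (hwnn j)
        have h6 : p ^ (x - 1) = 1 - h := by rw [hhdef]; ring
        rw [h6] at h5
        linarith [h5]
      · simp only [hmem, if_neg, not_false_iff, sub_zero]
        have h4 : p ^ (j * (x-j)) ≤ 1 := pow_le_one₀ hp0 hp1
        calc w j * p ^ (j * (x-j)) ≤ w j * 1 := mul_le_mul_of_nonneg_left h4 (hwnn j)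
          _ = w j := mul_one _
    calc ∑ j ∈ Finset.range (x+1), w j * p ^ (j * (x - j))
        ≤ ∑ j ∈ Finset.range (x+1), (w j - (if j ∈ Finset.Ico 1 x then h * w j else 0)) :=
          Finset.sum_le_sum hbound
      _ = (∑ j ∈ Finset.range (x+1), w j)
            - ∑ j ∈ Finset.range (x+1), (if j ∈ Finset.Ico 1 x then h * w j else 0) :=
          Finset.sum_sub_distrib _ _
      _ = 1 - h * ∑ j ∈ Finset.Ico 1 x, w j := by
          rw [hsum, Finset.sum_ite_mem,
            Finset.inter_eq_right.mpr hIco_sub, Finset.mul_sum]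
  -- step 2: the middle sum equals 1 - w 0 - w x
  have hsplit : ∑ j ∈ Finset.Ico 1 x, w j = 1 - w 0 - w x := by
    have h1 : ∑ j ∈ Finset.range (x+1), w j = (∑ j ∈ Finset.range x, w j) + w x :=
      Finset.sum_range_succ w x
    have h2 : ∑ j ∈ Finset.range x, w j = w 0 + ∑ j ∈ Finset.Ico 1 x, w j := by
      rw [Finset.range_eq_Ico]
      exact Finset.sum_eq_sum_Ico_succ_bot (by omega) w
    rw [h2] at h1
    rw [hsum] at h1
    linarith
  -- bound on w 0
  have hw0bound : w 0 ≤ Real.exp (-((k:ℝ) * x / n)) := by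
    have h1 : ((n-k).choose x : ℝ) * (n:ℝ)^x ≤ (n.choose x : ℝ) * (((n:ℕ)-k : ℕ):ℝ)^x := by
      exact_mod_cast choose_ratio x (n-k) n (Nat.sub_le n k)
    have hcast : (((n:ℕ)-k : ℕ):ℝ) = (n:ℝ) - k := by
      push_cast [Nat.cast_sub hkn']
      ring
    rw [hcast] at h1
    have h2 : w 0 ≤ (((n:ℝ)-k)/n)^x := by
      rw [hw]
      simp only [Nat.choose_zero_right, Nat.cast_one, one_mul, Nat.sub_zero]
      rw [div_pow, div_le_div_iff₀ hchoosepos (by positivity)]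
      linarith [h1]
    have h3 : ((n:ℝ)-k)/n ≤ Real.exp (-((k:ℝ)/n)) := by
      have ha := Real.add_one_le_exp (-((k:ℝ)/n))
      have hb : ((n:ℝ)-k)/n = 1 - (k:ℝ)/n := by field_simp
      linarith
    have h4 : (((n:ℝ)-k)/n)^x ≤ Real.exp (-((k:ℝ)/n))^x :=
      pow_le_pow_left₀ (by positivity) h3 x
    have h5 : Real.exp (-((k:ℝ)/n))^x = Real.exp (-((k:ℝ) * x / n)) := by
      rw [← Real.exp_nat_mul]
      congr 1
      ring
    rw [h5] at h4
    linarith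
  -- bound on w x
  have hwxbound : w x ≤ (k:ℝ)^2 / ((n:ℝ)-k)^2 := by
    have h1 : (k.choose x : ℝ) * (n:ℝ)^x ≤ (n.choose x : ℝ) * (k:ℝ)^x := by
      exact_mod_cast choose_ratio x k n hkn'
    have h2 : w x ≤ ((k:ℝ)/n)^x := by
      rw [hw]
      simp only [Nat.sub_self, Nat.choose_zero_right, Nat.cast_one, mul_one]
      rw [div_pow, div_le_div_iff₀ hchoosepos (by positivity)]
      linarith [h1]
    have h3 : ((k:ℝ)/n)^x ≤ ((k:ℝ)/n)^2 :=
      pow_le_pow_of_le_one (by positivity) (by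
        rw [div_le_one hnR]; linarith) hx2
    have h4 : ((k:ℝ)/n)^2 ≤ ((k:ℝ)/((n:ℝ)-k))^2 := by
      have hd : (k:ℝ)/n ≤ (k:ℝ)/((n:ℝ)-k) :=
        div_le_div_of_nonneg_left hkR hNk (by linarith)
      have hnn : (0:ℝ) ≤ (k:ℝ)/n := by positivity
      exact pow_le_pow_left₀ hnn hd 2
    have h5 : ((k:ℝ)/((n:ℝ)-k))^2 = (k:ℝ)^2 / ((n:ℝ)-k)^2 := div_pow _ _ _
    linarith
  -- combine
  have hA : (k : ℝ) / n * x - (k : ℝ) ^ 2 / ((n : ℝ) - k) ^ 2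
      - (Real.exp (-((k : ℝ) * x / n)) - 1 + (k : ℝ) * x / n)
      ≤ ∑ j ∈ Finset.Ico 1 x, w j := by
    rw [hsplit]
    have : (k : ℝ) / n * x = (k:ℝ) * x / n := by ring
    rw [this]
    linarith
  have hfinal : h * ((k : ℝ) / n * x - (k : ℝ) ^ 2 / ((n : ℝ) - k) ^ 2
      - (Real.exp (-((k : ℝ) * x / n)) - 1 + (k : ℝ) * x / n))
      ≤ h * ∑ j ∈ Finset.Ico 1 x, w j := mul_le_mul_of_nonneg_left hA hh0
  calc qk n k x q ≤ 1 - h * ∑ j ∈ Finset.Ico 1 x, w j := hstep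
    _ ≤ 1 - ((k : ℝ) / n * x - (k : ℝ) ^ 2 / ((n : ℝ) - k) ^ 2
            - (Real.exp (-((k : ℝ) * x / n)) - 1 + (k : ℝ) * x / n)) * h := by linarith
end
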